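/- Let C be a nonempty closed spherically convex subset of the unit sphere S of ℝⁿ, and suppose C is not a subsphere, i.e. there is no linear subspace V of ℝⁿ with C = S ∩ V. Then there exists a point p ∈ C such that g(p) = p for every linear isometry g of ℝⁿ satisfying g(C) = C. -/

import Mathlib

open scoped RealInnerProductSpace

/-- The unit sphere of `ℝⁿ`. -/
def unitSphere (n : ℕ) : Set (EuclideanSpace ℝ (Fin n)) := {x | ‖x‖ = 1}

/-- The angular metric on the unit sphere. -/
noncomputable def sdist {n : ℕ} (x y : EuclideanSpace ℝ (Fin n)) : ℝ :=
  Real.arccos ⟪x, y⟫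

/-- A subset of the unit sphere is spherically convex if for all non-antipodal
distinct points `x, y` of it, the minimizing geodesic from `x` to `y` is
contained in it. -/
def SphConvex {n : ℕ} (C : Set (EuclideanSpace ℝ (Fin n))) : Prop :=
  ∀ x ∈ C, ∀ y ∈ C, x ≠ y → x ≠ -y → ∀ t ∈ Set.Icc (0 : ℝ) 1,
    (Real.sin ((1 - t) * sdist x y) / Real.sin (sdist x y)) • x +
      (Real.sin (t * sdist x y) / Real.sin (sdist x y)) • y ∈ C

/-!
The antipodally symmetric part `C ∩ -C` spans a subspace `V` with `S ∩ V = C ∩ -C`: the cone over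
`C` is closed under addition, since a positive combination of non-antipodal points of `C` is a
positive multiple of a point on the geodesic between them, so `V` lies in that cone. If `C = -C`
this makes `C` the subsphere `S ∩ V`. Otherwise projecting a non-symmetric point of `C` onto `Vᗮ`
shows that `C' = C ∩ Vᗮ` is nonempty; it contains no antipodal pair, so its convex hull consists
of positive multiples of points of `C'`. That hull is compact, convex and invariant under every
isometry preserving `C`, so its unique point of minimal norm is fixed, and so is its
normalisation.
-/
open Real Set Pointwise

theorem isCompact_convexHull {E : Type*} [AddCommGroup E] [Module ℝ E] [TopologicalSpace E]
    [IsTopologicalAddGroup E] [ContinuousSMul ℝ E] [FiniteDimensional ℝ E] {s : Set E}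
    (hs : IsCompact s) : IsCompact (convexHull ℝ s) := by
  -- Carathéodory: convex combinations of at most `finrank + 1` points suffice
  have hcover : convexHull ℝ s = ⋃ k : Fin (Module.finrank ℝ E + 2),
      (fun p : (Fin k → ℝ) × (Fin k → E) => ∑ i, p.1 i • p.2 i) ''
        (stdSimplex ℝ (Fin k) ×ˢ univ.pi fun _ => s) := by
    refine Subset.antisymm (fun x hx => ?_) (iUnion_subset fun k => ?_)
    · obtain ⟨ι, _, z, w, hzs, hz, hw0, hw1, rfl⟩ := eq_pos_convex_span_of_mem_convexHull hx
      have hk : Fintype.card ι < Module.finrank ℝ E + 2 := by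
        have := hz.card_le_finrank_succ.trans (Nat.succ_le_succ (Submodule.finrank_le _))
        omega
      let σ := (Fintype.equivFin ι).symm
      refine mem_iUnion.2 ⟨⟨_, hk⟩, ⟨w ∘ σ, z ∘ σ⟩, ⟨⟨fun i => (hw0 _).le, ?_⟩,
        fun i _ => hzs ⟨_, rfl⟩⟩, σ.sum_comp fun i => w i • z i⟩
      exact (σ.sum_comp w).trans hw1
    · rintro _ ⟨⟨w, z⟩, ⟨hw, hz⟩, rfl⟩
      exact (convex_convexHull ℝ s).sum_mem (fun i _ => hw.1 i) hw.2
        fun i _ => subset_convexHull ℝ s (hz i trivial)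
  rw [hcover]
  exact isCompact_iUnion fun k =>
    ((isCompact_stdSimplex _ _).prod (isCompact_univ_pi fun _ => hs)).image (by fun_prop)

theorem LinearIsometryEquiv.image_convexHull {E F : Type*} [NormedAddCommGroup E]
    [NormedSpace ℝ E] [NormedAddCommGroup F] [NormedSpace ℝ F] (g : E ≃ₗᵢ[ℝ] F) (s : Set E) :
    g '' convexHull ℝ s = convexHull ℝ (g '' s) :=
  g.toLinearEquiv.toLinearMap.image_convexHull s

section MinimalNorm

variable {E : Type*} [NormedAddCommGroup E] [NormedSpace ℝ E] [StrictConvexSpace ℝ E]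

theorem Convex.eq_of_isMinOn_norm {K : Set E} (hK : Convex ℝ K) {x y : E} (hx : x ∈ K)
    (hy : y ∈ K) (hxmin : IsMinOn (‖·‖) K x) (hymin : IsMinOn (‖·‖) K y) : x = y := by
  by_contra hne
  have hnorm : ‖x‖ = ‖y‖ := le_antisymm (isMinOn_iff.1 hxmin y hy) (isMinOn_iff.1 hymin x hx)
  have hmid : (1 / 2 : ℝ) • (x + y) ∈ K := by
    simpa only [smul_add] using hK hx hy (by norm_num) (by norm_num) (by norm_num)
  exact (isMinOn_iff.1 hxmin _ hmid).not_gt ((norm_midpoint_lt_iff hnorm).2 hne)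

theorem LinearIsometry.apply_eq_of_isMinOn_norm (g : E →ₗᵢ[ℝ] E) {K : Set E} (hK : Convex ℝ K)
    (hgK : MapsTo g K K) {q : E} (hq : q ∈ K) (hmin : IsMinOn (‖·‖) K q) : g q = q :=
  (hK.eq_of_isMinOn_norm hq (hgK hq) hmin fun y hy => by
    simpa only [g.norm_map] using hmin hy).symm

end MinimalNorm

section SymmSpan

variable {E F : Type*} [NormedAddCommGroup E] [InnerProductSpace ℝ E] [NormedAddCommGroup F]
  [InnerProductSpace ℝ F]

def symmSpan (C : Set E) : Submodule ℝ E := Submodule.span ℝ (C ∩ -C)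

def pointedPart (C : Set E) : Set E := C ∩ (symmSpan C)ᗮ

theorem LinearIsometryEquiv.map_symmSpan (g : E ≃ₗᵢ[ℝ] F) (C : Set E) :
    (symmSpan C).map (g.toLinearEquiv : E →ₗ[ℝ] F) = symmSpan (g '' C) := by
  rw [symmSpan, Submodule.map_span]
  simp [symmSpan, image_inter g.injective, image_neg]

theorem LinearIsometryEquiv.image_pointedPart (g : E ≃ₗᵢ[ℝ] E) {C : Set E} (hg : g '' C = C) :
    g '' pointedPart C = pointedPart C := by
  have hperp := Submodule.map_orthogonal_equiv (symmSpan C) g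
  rw [g.map_symmSpan, hg] at hperp
  rw [pointedPart, image_inter g.injective, hg]
  exact congrArg (C ∩ ·) (congrArg SetLike.coe hperp)

end SymmSpan

variable {n : ℕ} {x y : EuclideanSpace ℝ (Fin n)} {C : Set (EuclideanSpace ℝ (Fin n))}

theorem sdist_mem_Ioo (hx : ‖x‖ = 1) (hy : ‖y‖ = 1) (hxy : x ≠ y) (hxy' : x ≠ -y) :
    sdist x y ∈ Ioo 0 π := by
  have hneg : ⟪x, -y⟫ < 1 := (inner_lt_one_iff_real_of_norm_eq_one hx (by rwa [norm_neg])).2 hxy'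
  rw [inner_neg_right] at hneg
  exact ⟨arccos_pos.2 ((inner_lt_one_iff_real_of_norm_eq_one hx hy).2 hxy),
    arccos_lt_pi.2 (by linarith)⟩

def sphCone (C : Set (EuclideanSpace ℝ (Fin n))) : Set (EuclideanSpace ℝ (Fin n)) :=
  insert 0 (Ioi (0 : ℝ) • C)

theorem subset_sphCone : C ⊆ sphCone C :=
  fun x hx => mem_insert_of_mem _ ⟨1, mem_Ioi.2 one_pos, x, hx, one_smul ℝ x⟩

theorem smul_mem_sphCone {r : ℝ} (hr : 0 ≤ r) {u : EuclideanSpace ℝ (Fin n)}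
    (hu : u ∈ sphCone C) : r • u ∈ sphCone C := by
  obtain rfl | hr := hr.eq_or_lt
  · rw [zero_smul]; exact mem_insert _ _
  rcases hu with rfl | ⟨s, hs, c, hc, rfl⟩
  · rw [smul_zero]; exact mem_insert _ _
  · exact mem_insert_of_mem _ ⟨r * s, mem_Ioi.2 (mul_pos hr hs), c, hc, (smul_smul r s c).symm⟩

theorem mem_of_mem_sphCone (hsub : C ⊆ unitSphere n) {z : EuclideanSpace ℝ (Fin n)}
    (hz : ‖z‖ = 1) (hzC : z ∈ sphCone C) : z ∈ C := by
  rcases hzC with rfl | ⟨s, hs, c, hc, rfl⟩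
  · simp at hz
  · have hc1 : ‖c‖ = 1 := hsub hc
    rw [norm_smul, hc1, mul_one, Real.norm_of_nonneg (le_of_lt hs)] at hz
    simpa [hz] using hc

theorem neg_notMem_pointedPart (hsub : C ⊆ unitSphere n) (hx : x ∈ pointedPart C) :
    -x ∉ pointedPart C := by
  intro hnx
  have hxV : x ∈ symmSpan C := Submodule.subset_span ⟨hx.1, mem_neg.2 hnx.1⟩
  have hx0 : x = 0 := inner_self_eq_zero.1 (Submodule.inner_right_of_mem_orthogonal hxV hx.2)
  have hx1 : ‖x‖ = 1 := hsub hx.1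
  simp [hx0] at hx1

theorem isCompact_pointedPart (hcl : IsClosed C) (hsub : C ⊆ unitSphere n) :
    IsCompact (pointedPart C) :=
  (isCompact_sphere 0 1).of_isClosed_subset (hcl.inter (Submodule.isClosed_orthogonal _))
    fun _ hz => mem_sphere_zero_iff_norm.2 (hsub hz.1)

namespace SphConvex

/-- The ray through `α • x + β • y` meets the geodesic from `x` to `y`, by the intermediate value
theorem. -/
theorem smul_add_smul_mem (hC : SphConvex C) (hsub : C ⊆ unitSphere n) (hx : x ∈ C) (hy : y ∈ C)
    (hxy : x ≠ -y) {α β : ℝ} (hα : 0 < α) (hβ : 0 < β) : α • x + β • y ∈ Ioi (0 : ℝ) • C := by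
  obtain rfl | hxy' := eq_or_ne x y
  · exact ⟨α + β, mem_Ioi.2 (by positivity), x, hx, add_smul α β x⟩
  set θ := sdist x y with hθ_def
  have hθ : θ ∈ Ioo 0 π := sdist_mem_Ioo (hsub hx) (hsub hy) hxy' hxy
  have hsinθ : 0 < sin θ := sin_pos_of_pos_of_lt_pi hθ.1 hθ.2
  set h : ℝ → ℝ := fun t => α * sin (t * θ) - β * sin ((1 - t) * θ)
  have hcont : ContinuousOn h (Icc 0 1) := by fun_prop
  obtain ⟨t, ht, hht⟩ : (0 : ℝ) ∈ h '' Ioo 0 1 :=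
    intermediate_value_Ioo zero_le_one hcont ⟨by simp [h]; positivity, by simp [h]; positivity⟩
  have hsin : 0 < sin ((1 - t) * θ) :=
    sin_pos_of_pos_of_lt_pi (by nlinarith [ht.2, hθ.1]) (by nlinarith [ht.1, hθ.1, hθ.2])
  have hgeo := hC x hx y hy hxy' hxy t (Ioo_subset_Icc_self ht)
  rw [← hθ_def] at hgeo
  refine ⟨α * sin θ / sin ((1 - t) * θ), mem_Ioi.2 (by positivity), _, hgeo, ?_⟩
  simp only [h, sub_eq_zero] at hht
  simp only [smul_add, smul_smul]
  congr 2
  · field_simp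
  · field_simp
    linarith

theorem convex_Ioi_smul (hC : SphConvex C) (hsub : C ⊆ unitSphere n)
    (hanti : ∀ z ∈ C, -z ∉ C) : Convex ℝ (Ioi (0 : ℝ) • C) := by
  refine convex_iff_forall_pos.2 ?_
  rintro _ ⟨s, hs, x, hx, rfl⟩ _ ⟨t, ht, y, hy, rfl⟩ a b ha hb -
  rw [smul_smul, smul_smul]
  exact hC.smul_add_smul_mem hsub hx hy (fun h => hanti y hy (h ▸ hx))
    (mul_pos ha hs) (mul_pos hb ht)

theorem inter_submodule (hC : SphConvex C) (W : Submodule ℝ (EuclideanSpace ℝ (Fin n))) :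
    SphConvex (C ∩ W) := fun x hx y hy hxy hxy' t ht =>
  ⟨hC x hx.1 y hy.1 hxy hxy' t ht, W.add_mem (W.smul_mem _ hx.2) (W.smul_mem _ hy.2)⟩

theorem add_mem_sphCone (hC : SphConvex C) (hsub : C ⊆ unitSphere n)
    {u v : EuclideanSpace ℝ (Fin n)} (hu : u ∈ sphCone C) (hv : v ∈ sphCone C) :
    u + v ∈ sphCone C := by
  rcases hu with rfl | ⟨s, hs, x, hx, rfl⟩
  · rwa [zero_add]
  rcases hv with rfl | ⟨t, ht, y, hy, rfl⟩
  · rw [add_zero]; exact mem_insert_of_mem _ ⟨s, hs, x, hx, rfl⟩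
  by_cases hxy : x = -y
  · subst hxy
    rcases le_total s t with hst | hts
    · rw [show s • -y + t • y = (t - s) • y by module]
      exact smul_mem_sphCone (sub_nonneg.2 hst) (subset_sphCone hy)
    · rw [show s • -y + t • y = (s - t) • -y by module]
      exact smul_mem_sphCone (sub_nonneg.2 hts) (subset_sphCone hx)
  · exact mem_insert_of_mem _ (hC.smul_add_smul_mem hsub hx hy hxy hs ht)

theorem symmSpan_subset_sphCone (hC : SphConvex C) (hsub : C ⊆ unitSphere n) :
    (symmSpan C : Set (EuclideanSpace ℝ (Fin n))) ⊆ sphCone C := by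
  intro x hx
  refine (Submodule.span_induction (p := fun x _ => x ∈ sphCone C ∧ -x ∈ sphCone C)
    (fun z hz => ⟨subset_sphCone hz.1, subset_sphCone hz.2⟩) ?_ ?_ ?_ hx).1
  · rw [neg_zero]; exact ⟨mem_insert _ _, mem_insert _ _⟩
  · rintro u v - - ⟨hu, hu'⟩ ⟨hv, hv'⟩
    exact ⟨hC.add_mem_sphCone hsub hu hv, neg_add u v ▸ hC.add_mem_sphCone hsub hu' hv'⟩
  · rintro r u - ⟨hu, hu'⟩
    rcases le_total 0 r with hr | hr
    · exact ⟨smul_mem_sphCone hr hu, smul_neg r u ▸ smul_mem_sphCone hr hu'⟩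
    · constructor
      · rw [← neg_smul_neg]; exact smul_mem_sphCone (neg_nonneg.2 hr) hu'
      · rw [← neg_smul]; exact smul_mem_sphCone (neg_nonneg.2 hr) hu

theorem mem_symmSpan_iff (hC : SphConvex C) (hsub : C ⊆ unitSphere n)
    {z : EuclideanSpace ℝ (Fin n)} (hz : ‖z‖ = 1) : z ∈ symmSpan C ↔ z ∈ C ∧ -z ∈ C := by
  refine ⟨fun hzV => ⟨?_, ?_⟩, fun h => Submodule.subset_span ⟨h.1, mem_neg.2 h.2⟩⟩
  · exact mem_of_mem_sphCone hsub hz (hC.symmSpan_subset_sphCone hsub hzV)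
  · exact mem_of_mem_sphCone hsub (by rwa [norm_neg])
      (hC.symmSpan_subset_sphCone hsub ((symmSpan C).neg_mem hzV))

theorem eq_unitSphere_inter_symmSpan (hC : SphConvex C) (hsub : C ⊆ unitSphere n)
    (hsymm : ∀ z ∈ C, -z ∈ C) : C = unitSphere n ∩ symmSpan C := by
  ext z
  refine ⟨fun hz => ⟨hsub hz, Submodule.subset_span ⟨hz, mem_neg.2 (hsymm z hz)⟩⟩, ?_⟩
  rintro ⟨hz, hzV⟩
  exact ((hC.mem_symmSpan_iff hsub hz).1 hzV).1

theorem pointedPart_nonempty (hC : SphConvex C) (hsub : C ⊆ unitSphere n)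
    (hx : x ∈ C) (hnx : -x ∉ C) : (pointedPart C).Nonempty := by
  set V := symmSpan C
  have hw : x - V.starProjection x ∈ sphCone C := by
    rw [sub_eq_add_neg]
    exact hC.add_mem_sphCone hsub (subset_sphCone hx)
      (hC.symmSpan_subset_sphCone hsub (V.neg_mem (V.starProjection_apply_mem x)))
  rcases hw with hw | ⟨s, hs, c, hc, hsc⟩
  · rw [sub_eq_zero] at hw
    exact absurd ((hC.mem_symmSpan_iff hsub (hsub hx)).1 (hw ▸ V.starProjection_apply_mem x)).2 hnx
  · have hperp := Vᗮ.smul_mem s⁻¹ (V.sub_starProjection_mem_orthogonal x)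
    rw [← hsc, smul_smul, inv_mul_cancel₀ (ne_of_gt hs), one_smul] at hperp
    exact ⟨c, hc, hperp⟩

theorem convexHull_pointedPart_subset (hC : SphConvex C) (hsub : C ⊆ unitSphere n) :
    convexHull ℝ (pointedPart C) ⊆ Ioi (0 : ℝ) • pointedPart C :=
  convexHull_min (fun c hc => ⟨1, mem_Ioi.2 one_pos, c, hc, one_smul ℝ c⟩)
    ((hC.inter_submodule _).convex_Ioi_smul (inter_subset_left.trans hsub)
      fun _ => neg_notMem_pointedPart hsub)

end SphConvex

theorem stmt5_general {n : ℕ} (C : Set (EuclideanSpace ℝ (Fin n)))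
    (hcl : IsClosed C) (hsub : C ⊆ unitSphere n)
    (hconv : SphConvex C)
    (hns : ¬ ∃ V : Submodule ℝ (EuclideanSpace ℝ (Fin n)),
      C = unitSphere n ∩ V) :
    ∃ p ∈ C, ∀ g : EuclideanSpace ℝ (Fin n) ≃ₗᵢ[ℝ] EuclideanSpace ℝ (Fin n),
      g '' C = C → g p = p := by
  by_cases hsymm : ∀ z ∈ C, -z ∈ C
  · exact absurd ⟨symmSpan C, hconv.eq_unitSphere_inter_symmSpan hsub hsymm⟩ hns
  push Not at hsymm
  obtain ⟨x, hx, hnx⟩ := hsymm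
  set K := convexHull ℝ (pointedPart C)
  obtain ⟨q, hq, hqmin⟩ := (isCompact_convexHull (isCompact_pointedPart hcl hsub)).exists_isMinOn
    ((hconv.pointedPart_nonempty hsub hx hnx).mono (subset_convexHull ℝ _))
    continuous_norm.continuousOn
  obtain ⟨a, ha, c, hc, rfl⟩ := hconv.convexHull_pointedPart_subset hsub hq
  refine ⟨c, hc.1, fun g hg => ?_⟩
  have hgK : MapsTo g K K :=
    mapsTo_iff_image_subset.2 (by rw [g.image_convexHull, g.image_pointedPart hg])
  have hgq : g (a • c) = a • c :=
    g.toLinearIsometry.apply_eq_of_isMinOn_norm (convex_convexHull ℝ _) hgK hq hqmin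
  rw [map_smul] at hgq
  exact smul_right_injective _ (ne_of_gt ha) hgq

theorem stmt5 {n : ℕ} (C : Set (EuclideanSpace ℝ (Fin n)))
    (hne : C.Nonempty) (hcl : IsClosed C) (hsub : C ⊆ unitSphere n)
    (hconv : SphConvex C)
    (hns : ¬ ∃ V : Submodule ℝ (EuclideanSpace ℝ (Fin n)),
      C = unitSphere n ∩ V) :
    ∃ p ∈ C, ∀ g : EuclideanSpace ℝ (Fin n) ≃ₗᵢ[ℝ] EuclideanSpace ℝ (Fin n),
      g '' C = C → g p = p :=
  stmt5_general C hcl hsub hconv hns
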